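/- arXiv:2508.19216 — 3 statements merged into one kernel-verified Lean document; each statement's English description precedes it below -/
import Mathlib

section
/- Let ρ : ℝ → ℝ be continuous with ρ' ∈ L²(ℝ), 1-ρ² ∈ L²(ℝ), ρ ≥ 0, and ρ(x) → 1 as x → -∞. Then for every x ∈ ℝ, (1-ρ(x))² ≤ 2·‖1-ρ²‖_{L²}·‖ρ'‖_{L²}. -/
/-!
Since `1 - ρ → 0` at `-∞`, `(1 - ρ x)²` is the integral over `(-∞, x]` of its derivative
`-2 (1 - ρ) ρ'`. For `ρ ≥ 0` we have `|1 - ρ| ≤ |1 - ρ| (1 + ρ) = |1 - ρ²|`, so this derivative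
is dominated by `2 |1 - ρ²| |ρ'|`, whose integral Cauchy–Schwarz bounds by `2 ‖1 - ρ²‖₂ ‖ρ'‖₂`.
-/

open MeasureTheory Filter Set Topology

lemma abs_one_sub_le_abs_one_sub_sq {r : ℝ} (hr : 0 ≤ r) : |1 - r| ≤ |1 - r ^ 2| := by
  have h : |1 - r ^ 2| = |1 - r| * (1 + r) := by
    rw [show 1 - r ^ 2 = (1 - r) * (1 + r) by ring, abs_mul,
      abs_of_nonneg (by linarith : 0 ≤ 1 + r)]
  rw [h]
  nlinarith [abs_nonneg (1 - r)]

lemma integral_abs_mul_le_sqrt_mul_sqrt {α : Type*} [MeasurableSpace α] {μ : Measure α}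
    {f g : α → ℝ} (hf : MemLp f 2 μ) (hg : MemLp g 2 μ) :
    ∫ a, |f a| * |g a| ∂μ ≤ √(∫ a, f a ^ 2 ∂μ) * √(∫ a, g a ^ 2 ∂μ) := by
  have hf' : MemLp (fun a => |f a|) (ENNReal.ofReal 2) μ := by
    rw [ENNReal.ofReal_ofNat]; exact hf.abs
  have hg' : MemLp (fun a => |g a|) (ENNReal.ofReal 2) μ := by
    rw [ENNReal.ofReal_ofNat]; exact hg.abs
  simpa [Real.sqrt_eq_rpow] using integral_mul_le_Lp_mul_Lq_of_nonneg
    Real.HolderConjugate.two_two (ae_of_all _ fun a => abs_nonneg (f a))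
    (ae_of_all _ fun a => abs_nonneg (g a)) hf' hg'

lemma le_integral_abs_of_hasDerivAt_of_tendsto_atBot {F F' : ℝ → ℝ}
    (hF : ∀ x, HasDerivAt F (F' x) x) (hF' : Integrable F') (hlim : Tendsto F atBot (𝓝 0))
    (x : ℝ) : F x ≤ ∫ y, |F' y| := by
  have hFTC : ∫ y in Iic x, F' y = F x := by
    simpa using integral_Iic_of_hasDerivAt_of_tendsto' (fun y _ => hF y) hF'.integrableOn hlim
  calc F x = ∫ y in Iic x, F' y := hFTC.symm
    _ ≤ ∫ y in Iic x, |F' y| := integral_mono hF'.integrableOn hF'.abs.integrableOn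
        fun y => le_abs_self _
    _ ≤ ∫ y, |F' y| := setIntegral_le_integral hF'.abs (ae_of_all _ fun y => abs_nonneg _)

theorem one_sub_rho_sq_bound_general (ρ ρ' : ℝ → ℝ)
    (hderiv : ∀ x, HasDerivAt ρ (ρ' x) x)
    (hρ'L2 : MemLp ρ' 2 volume)
    (hL2 : MemLp (fun x => 1 - (ρ x)^2) 2 volume)
    (hnn : ∀ x, 0 ≤ ρ x)
    (hlim : Filter.Tendsto ρ Filter.atBot (nhds 1)) :
    ∀ x : ℝ, (1 - ρ x)^2 ≤
      2 * Real.sqrt (∫ y : ℝ, (1 - (ρ y)^2)^2) * Real.sqrt (∫ y : ℝ, (ρ' y)^2) := by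
  intro x
  set D : ℝ → ℝ := fun y => -(2 * (1 - ρ y) * ρ' y)
  have hD : ∀ y, HasDerivAt (fun z => (1 - ρ z) ^ 2) (D y) y := fun y => by
    simpa [D] using ((hderiv y).const_sub 1).fun_pow 2
  have hD_le : ∀ y, |D y| ≤ 2 * (|1 - ρ y ^ 2| * |ρ' y|) := fun y => by
    simp only [D, abs_neg, abs_mul, abs_two, mul_assoc]
    gcongr 2 * (?_ * _)
    exact abs_one_sub_le_abs_one_sub_sq (hnn y)
  have hρ : Continuous ρ := Differentiable.continuous fun y => (hderiv y).differentiableAt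
  have hbound_int : Integrable fun y => 2 * (|1 - ρ y ^ 2| * |ρ' y|) :=
    (hL2.abs.integrable_mul hρ'L2.abs).const_mul 2
  have hD_int : Integrable D := by
    refine hbound_int.mono' ?_ (ae_of_all _ hD_le)
    exact (((continuous_const.sub hρ).aestronglyMeasurable).const_mul 2).mul hρ'L2.1 |>.neg
  have hlim0 : Tendsto (fun y => (1 - ρ y) ^ 2) atBot (𝓝 0) := by
    simpa using (hlim.const_sub 1).pow 2
  calc (1 - ρ x) ^ 2
      ≤ ∫ y, |D y| := le_integral_abs_of_hasDerivAt_of_tendsto_atBot hD hD_int hlim0 x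
    _ ≤ ∫ y, 2 * (|1 - ρ y ^ 2| * |ρ' y|) := integral_mono hD_int.abs hbound_int hD_le
    _ ≤ _ := by
        rw [integral_const_mul, mul_assoc]
        gcongr
        exact integral_abs_mul_le_sqrt_mul_sqrt hL2 hρ'L2

/-- If `ρ` is continuous with derivative `ρ' ∈ L²(ℝ)`, `1-ρ² ∈ L²(ℝ)`, `ρ ≥ 0` and
`ρ(x) → 1` as `x → -∞`, then `(1-ρ(x))² ≤ 2‖1-ρ²‖_{L²}‖ρ'‖_{L²}` for every `x`. -/
theorem one_sub_rho_sq_bound (ρ ρ' : ℝ → ℝ)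
    (hcont : Continuous ρ)
    (hderiv : ∀ x, HasDerivAt ρ (ρ' x) x)
    (hρ'L2 : MemLp ρ' 2 volume)
    (hL2 : MemLp (fun x => 1 - (ρ x)^2) 2 volume)
    (hnn : ∀ x, 0 ≤ ρ x)
    (hlim : Filter.Tendsto ρ Filter.atBot (nhds 1)) :
    ∀ x : ℝ, (1 - ρ x)^2 ≤
      2 * Real.sqrt (∫ y : ℝ, (1 - (ρ y)^2)^2) * Real.sqrt (∫ y : ℝ, (ρ' y)^2) :=
  one_sub_rho_sq_bound_general ρ ρ' hderiv hρ'L2 hL2 hnn hlim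
end

section
/- Suppose ρ, v : ℝ → ℝ are C² and solve the ODE system -ρ'' + c²(1-ρ⁴)/(4ρ³) = (1-ρ²-αv²)ρ and -v'' = (λ - αρ² - βv²)v on ℝ, with ρ > 0, and suppose (ρ')² + (v')² - (1 - c²/(2ρ²))·(1-ρ²)²/2 - ((β/2)v² + αρ² - λ)v² has derivative zero. Then for any x₀ with v(x₀) > 0 and (ρ'(x₀))² + (v'(x₀))² ≥ 0, if αρ(x₀)² < λ - (β/2)v(x₀)² and ρ(x₀)² < c²/2, a contradiction arises; i.e., ρ(x)² ≥ min{ λ/α - (β/(2α))v(x)², c²/2 } for all x where the Hamiltonian identity (ρ')²+(v')² = (1 - c²/(2ρ²))(1-ρ²)²/2 + ((β/2)v² + αρ² - λ)v² holds and v(x) > 0. -/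
/-!
At a point where `ρ² < c²/2` and `αρ² < λ - (β/2)v²` with `v ≠ 0`, both summands of the
right-hand side of the Hamiltonian identity are negative (the first one non-positive), while its
left-hand side `(ρ')² + (v')²` is a sum of squares.
-/

noncomputable def hamiltonianPotential (α β c lam r w : ℝ) : ℝ :=
  (1 - c^2 / (2 * r^2)) * (1 - r^2)^2 / 2 + ((β/2) * w^2 + α * r^2 - lam) * w^2

lemma one_sub_div_two_mul_sq_neg {c r : ℝ} (hr : r ≠ 0) (h : r^2 < c^2 / 2) :
    1 - c^2 / (2 * r^2) < 0 := by
  rw [sub_neg, lt_div_iff₀ (by positivity)]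
  linarith

lemma hamiltonianPotential_neg {α β c lam r w : ℝ} (hr : r ≠ 0) (hw : w ≠ 0)
    (hrc : r^2 < c^2 / 2) (hrw : α * r^2 < lam - β/2 * w^2) :
    hamiltonianPotential α β c lam r w < 0 := by
  have hfirst : (1 - c^2 / (2 * r^2)) * (1 - r^2)^2 / 2 ≤ 0 :=
    div_nonpos_of_nonpos_of_nonneg
      (mul_nonpos_of_nonpos_of_nonneg (one_sub_div_two_mul_sq_neg hr hrc).le (sq_nonneg _))
      zero_le_two
  have hsecond : ((β/2) * w^2 + α * r^2 - lam) * w^2 < 0 :=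
    mul_neg_of_neg_of_pos (by linarith) (by positivity)
  unfold hamiltonianPotential
  linarith

lemma lt_div_sub_div_mul_iff {α β lam s t : ℝ} (hα : 0 < α) :
    t < lam/α - β/(2*α) * s ↔ α * t < lam - β/2 * s := by
  have hsplit : lam/α - β/(2*α) * s = (lam - β/2 * s) / α := by
    field_simp
  rw [hsplit, lt_div_iff₀' hα]

theorem rho_sq_lower_bound_general (α β c lam : ℝ) (hα : 0 < α)
    (ρ v ρ' v' : ℝ → ℝ)
    (hρpos : ∀ x, 0 < ρ x)
    (hHam : ∀ x, (ρ' x)^2 + (v' x)^2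
      = (1 - c^2 / (2 * (ρ x)^2)) * (1 - (ρ x)^2)^2 / 2
        + ((β/2) * (v x)^2 + α * (ρ x)^2 - lam) * (v x)^2) :
    ∀ x : ℝ, 0 < v x →
      min (lam/α - (β/(2*α)) * (v x)^2) (c^2/2) ≤ (ρ x)^2 := by
  intro x hv
  by_contra! hlt
  obtain ⟨hρv, hρc⟩ := lt_min_iff.mp hlt
  have hneg := hamiltonianPotential_neg (hρpos x).ne' hv.ne' hρc
    ((lt_div_sub_div_mul_iff hα).mp hρv)
  rw [hamiltonianPotential, ← hHam x] at hneg
  exact hneg.not_ge (by positivity)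

/-- For solutions of the traveling-wave ODE system satisfying the Hamiltonian identity,
at every point where `v > 0` one has `ρ² ≥ min{λ/α - (β/(2α))v², c²/2}`. -/
theorem rho_sq_lower_bound (α β c lam : ℝ) (hα : 0 < α) (hβ : 0 ≤ β)
    (ρ v ρ' v' ρ'' v'' : ℝ → ℝ)
    (hρ1 : ∀ x, HasDerivAt ρ (ρ' x) x) (hρ2 : ∀ x, HasDerivAt ρ' (ρ'' x) x)
    (hv1 : ∀ x, HasDerivAt v (v' x) x) (hv2 : ∀ x, HasDerivAt v' (v'' x) x)
    (hρpos : ∀ x, 0 < ρ x)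
    (hODE1 : ∀ x, -ρ'' x + c^2 * (1 - (ρ x)^4) / (4 * (ρ x)^3)
      = (1 - (ρ x)^2 - α * (v x)^2) * ρ x)
    (hODE2 : ∀ x, -v'' x = (lam - α * (ρ x)^2 - β * (v x)^2) * v x)
    (hHam : ∀ x, (ρ' x)^2 + (v' x)^2
      = (1 - c^2 / (2 * (ρ x)^2)) * (1 - (ρ x)^2)^2 / 2
        + ((β/2) * (v x)^2 + α * (ρ x)^2 - lam) * (v x)^2) :
    ∀ x : ℝ, 0 < v x →
      min (lam/α - (β/(2*α)) * (v x)^2) (c^2/2) ≤ (ρ x)^2 :=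
  rho_sq_lower_bound_general α β c lam hα ρ v ρ' v' hρpos hHam
end

section
/- Let ρ, v be a solution of the traveling-wave ODE system with v ∈ H¹(ℝ), v ≥ 0, v not identically zero, ρ measurable, α > 0, β ≥ 0, and suppose αρ(x)² ≥ λ - (β/2)v(x)² for all x ∈ ℝ. Then testing the equation -v'' = (λ - αρ² - βv²)v with v gives 0 = ∫((v')² + (βv² + αρ² - λ)v²)dx ≥ ∫((v')² + (β/2)v⁴)dx ≥ 0, hence v ≡ 0 — contradiction. Therefore there exists y ∈ ℝ with λ/α - (β/(2α))v(y)² > c²/2 whenever ρ < 1 everywhere and the minimum bound ρ² ≥ min{λ/α - (β/(2α))v², c²/2} holds; consequently 2λ > αc². -/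
/-!
Argue by contradiction: if `λ/α - (β/(2α))v² ≤ c²/2` everywhere, the minimum bound gives
`αρ² ≥ λ - (β/2)v²`, so both summands `(v')²` and `(βv² + αρ² - λ)v² ≥ (β/2)v⁴` of the
tested equation are nonnegative. Their integral vanishes, so `v' = 0` a.e.; hence `v` is
constant, and a nonzero constant is not in `L²(ℝ)`.
-/

open MeasureTheory Filter

section

variable {E : Type*} [NormedAddCommGroup E] [NormedSpace ℝ E] [CompleteSpace E]

theorem eq_of_hasDerivAt_of_ae_eq_zero {f f' : ℝ → E} (hf : ∀ x, HasDerivAt f (f' x) x)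
    (hf' : f' =ᵐ[volume] 0) (a b : ℝ) : f a = f b := by
  have hint : IntervalIntegrable f' volume a b :=
    (intervalIntegrable_const (c := (0 : E))).congr_ae (ae_restrict_of_ae hf'.symm)
  have hzero : ∫ x in a..b, f' x = 0 :=
    intervalIntegral.integral_zero_ae (hf'.mono fun x hx _ => hx)
  have hftc := intervalIntegral.integral_eq_sub_of_hasDerivAt (fun x _ => hf x) hint
  exact (sub_eq_zero.mp (hftc.symm.trans hzero)).symm

theorem eq_zero_of_memLp_of_ae_deriv_eq_zero {p : ENNReal} (hp₀ : p ≠ 0) (hp : p ≠ ⊤)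
    {f f' : ℝ → E} (hf : ∀ x, HasDerivAt f (f' x) x) (hf' : f' =ᵐ[volume] 0)
    (hfp : MemLp f p volume) : f = 0 := by
  have hconst : f = fun _ => f 0 := funext fun x => eq_of_hasDerivAt_of_ae_eq_zero hf hf' x 0
  rw [hconst, memLp_const_iff hp₀ hp, Real.volume_univ] at hfp
  rcases hfp with h | h
  · rw [hconst, h]; rfl
  · exact absurd h (lt_irrefl _)

end

theorem ae_eq_zero_of_integral_add_eq_zero {α : Type*} [MeasurableSpace α] {μ : Measure α}
    {f g : α → ℝ} (hf : 0 ≤ f) (hg : 0 ≤ g) (hfg : Integrable (f + g) μ)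
    (h : ∫ x, (f + g) x ∂μ = 0) : f =ᵐ[μ] 0 := by
  have hsum : f + g =ᵐ[μ] 0 := (integral_eq_zero_iff_of_nonneg (add_nonneg hf hg) hfg).mp h
  filter_upwards [hsum] with x hx
  simp only [Pi.add_apply, Pi.zero_apply] at hx ⊢
  linarith [show 0 ≤ f x from hf x, show 0 ≤ g x from hg x]

theorem sub_le_mul_sq_of_min_le {α β c lam r w : ℝ} (hα : 0 < α)
    (hmin : min (lam/α - (β/(2*α)) * w^2) (c^2/2) ≤ r^2)
    (hle : lam/α - (β/(2*α)) * w^2 ≤ c^2/2) : lam - (β/2) * w^2 ≤ α * r^2 := by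
  rw [min_eq_left hle] at hmin
  have h := mul_le_mul_of_nonneg_left hmin hα.le
  have e : α * (lam/α - (β/(2*α)) * w^2) = lam - (β/2) * w^2 := by field_simp
  linarith

theorem potential_term_nonneg {α β lam r w : ℝ} (hβ : 0 ≤ β)
    (h : lam - (β/2) * w^2 ≤ α * r^2) : 0 ≤ (β * w^2 + α * r^2 - lam) * w^2 := by
  have : 0 ≤ β * w^2 + α * r^2 - lam := by nlinarith [sq_nonneg w]
  positivity

theorem mul_sq_lt_two_mul_of_lt_div_sub {α β c lam w : ℝ} (hα : 0 < α) (hβ : 0 ≤ β)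
    (h : c^2/2 < lam/α - (β/(2*α)) * w^2) : α * c^2 < 2 * lam := by
  have hw : 0 ≤ (β/(2*α)) * w^2 := by positivity
  have hc : c^2/2 < lam/α := by linarith
  rw [div_lt_div_iff₀ two_pos hα] at hc
  linarith

theorem multiplier_lower_bound_general (α β c lam : ℝ) (hα : 0 < α) (hβ : 0 ≤ β)
    (ρ v v' : ℝ → ℝ)
    (hvderiv : ∀ x, HasDerivAt v (v' x) x)
    (hv2 : MemLp v 2 volume)
    (hvne : ∃ x, v x ≠ 0)
    (hmin : ∀ x, min (lam/α - (β/(2*α)) * (v x)^2) (c^2/2) ≤ (ρ x)^2)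
    (hintg : Integrable (fun x => (v' x)^2 + (β * (v x)^2 + α * (ρ x)^2 - lam) * (v x)^2))
    (htest : 0 = ∫ x : ℝ, ((v' x)^2 + (β * (v x)^2 + α * (ρ x)^2 - lam) * (v x)^2)) :
    (∃ y : ℝ, c^2/2 < lam/α - (β/(2*α)) * (v y)^2) ∧ α * c^2 < 2 * lam := by
  have hy : ∃ y : ℝ, c^2/2 < lam/α - (β/(2*α)) * (v y)^2 := by
    by_contra! h
    have hpot x : 0 ≤ (β * (v x)^2 + α * (ρ x)^2 - lam) * (v x)^2 :=
      potential_term_nonneg hβ (sub_le_mul_sq_of_min_le hα (hmin x) (h x))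
    have hkin : (fun x => (v' x)^2) =ᵐ[volume] 0 :=
      ae_eq_zero_of_integral_add_eq_zero (fun x => sq_nonneg (v' x)) hpot hintg htest.symm
    have hv' : v' =ᵐ[volume] 0 := hkin.mono fun x hx => pow_eq_zero_iff two_ne_zero |>.mp hx
    obtain ⟨x₀, hx₀⟩ := hvne
    exact hx₀ (congrFun (eq_zero_of_memLp_of_ae_deriv_eq_zero two_ne_zero ENNReal.ofNat_ne_top
      hvderiv hv' hv2) x₀)
  obtain ⟨y, hy⟩ := hy
  exact ⟨⟨y, hy⟩, mul_sq_lt_two_mul_of_lt_div_sub hα hβ hy⟩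

/-- If `v` is a nonnegative, not identically zero `H¹` solution of the bright component
equation, `0 < ρ < 1`, the lower bound `ρ² ≥ min{λ/α - (β/(2α))v², c²/2}` holds, and
`0 = ∫((v')² + (βv² + αρ² - λ)v²)` (testing the equation with `v`), then there exists
`y` with `λ/α - (β/(2α))v(y)² > c²/2`, and consequently `2λ > αc²`. -/
theorem multiplier_lower_bound (α β c lam : ℝ) (hα : 0 < α) (hβ : 0 ≤ β)
    (ρ v v' : ℝ → ℝ)
    (hvcont : Continuous v)
    (hvderiv : ∀ x, HasDerivAt v (v' x) x)
    (hv2 : MemLp v 2 volume)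
    (hvnn : ∀ x, 0 ≤ v x) (hvne : ∃ x, v x ≠ 0)
    (hρ : ∀ x, 0 < ρ x ∧ ρ x < 1)
    (hmin : ∀ x, min (lam/α - (β/(2*α)) * (v x)^2) (c^2/2) ≤ (ρ x)^2)
    (hintg : Integrable (fun x => (v' x)^2 + (β * (v x)^2 + α * (ρ x)^2 - lam) * (v x)^2))
    (htest : 0 = ∫ x : ℝ, ((v' x)^2 + (β * (v x)^2 + α * (ρ x)^2 - lam) * (v x)^2)) :
    (∃ y : ℝ, c^2/2 < lam/α - (β/(2*α)) * (v y)^2) ∧ α * c^2 < 2 * lam :=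
  multiplier_lower_bound_general α β c lam hα hβ ρ v v' hvderiv hv2 hvne hmin hintg htest
end
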